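/- (Identity (1°) in the proof of Theorem A.) Given a Frobenius structure in flat coordinates on U ⊆ ℂ^m and a submanifold datum ι : W → U with T_pN ∘_p T_pN ⊆ T_pN for every p ∈ N, the second fundamental form satisfies the Codazzi-type relation U ∘ h(V,W) − V ∘ h(U,W) = h(V, U∘W) − h(U, V∘W) for all tangent fields U, V, W (here U∘W denotes the tangent field p ↦ U(p) ∘_p W(p), tangent by the закрытость hypothesis, and U ∘ h(V,W) is the ambient product of a tangent and a normal field). -/

import Mathlib

open scoped BigOperators

noncomputable section

/-- A Frobenius structure in flat coordinates on a connected open set `U ⊆ ℂ^m`: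
a nondegenerate symmetric bilinear form, a holomorphic family of commutative
associative invariant products with constant unit `e`, potentiality, and a
holomorphic Euler field `E` with constant `Dconst`. The ambient Levi-Civita
connection is the directional derivative. -/
structure FrobeniusStructure (m : ℕ) where
  U : Set (Fin m → ℂ)
  U_open : IsOpen U
  U_conn : IsConnected U
  g : (Fin m → ℂ) →ₗ[ℂ] (Fin m → ℂ) →ₗ[ℂ] ℂ
  g_symm : ∀ x y, g x y = g y x
  g_nondeg : ∀ x, (∀ y, g x y = 0) → x = 0
  mul : (Fin m → ℂ) → (Fin m → ℂ) →ₗ[ℂ] (Fin m → ℂ) →ₗ[ℂ] (Fin m → ℂ)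
  mul_holo : ∀ x y, DifferentiableOn ℂ (fun p => mul p x y) U
  mul_comm : ∀ p x y, mul p x y = mul p y x
  mul_assoc : ∀ p x y z, mul p (mul p x y) z = mul p x (mul p y z)
  g_invariant : ∀ p x y z, g (mul p x y) z = g x (mul p y z)
  e : Fin m → ℂ
  e_unit : ∀ p x, mul p e x = x
  potential : ∀ p ∈ U, ∀ w x y z : Fin m → ℂ,
    fderiv ℂ (fun q => g (mul q x y) z) p w = fderiv ℂ (fun q => g (mul q w y) z) p x
  E : (Fin m → ℂ) → (Fin m → ℂ)
  E_holo : DifferentiableOn ℂ E U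
  Dconst : ℂ
  euler_metric : ∀ p ∈ U, ∀ x y : Fin m → ℂ,
    g (fderiv ℂ E p x) y + g x (fderiv ℂ E p y) = Dconst * g x y
  euler_prod : ∀ p ∈ U, ∀ x y : Fin m → ℂ,
    fderiv ℂ (fun q => mul q x y) p (E p) - fderiv ℂ E p (mul p x y)
      + mul p (fderiv ℂ E p x) y + mul p x (fderiv ℂ E p y) = mul p x y

/-- A submanifold datum: a holomorphic embedding `emb : W → U` of a connected
open set `W ⊆ ℂ^n`, with everywhere injective differential, such that the
metric restricted to the tangent spaces `T_pN = range (D emb)_w` is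
nondegenerate; `pr w` is the `g`-orthogonal projection onto the tangent space. -/
structure SubmanifoldDatum (m n : ℕ) (F : FrobeniusStructure m) where
  W : Set (Fin n → ℂ)
  W_open : IsOpen W
  W_conn : IsConnected W
  emb : (Fin n → ℂ) → (Fin m → ℂ)
  emb_holo : DifferentiableOn ℂ emb W
  emb_maps : ∀ w ∈ W, emb w ∈ F.U
  emb_inj : Set.InjOn emb W
  demb_inj : ∀ w ∈ W, Function.Injective (fderiv ℂ emb w)
  pr : (Fin n → ℂ) → (Fin m → ℂ) →ₗ[ℂ] (Fin m → ℂ)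
  pr_mem : ∀ w ∈ W, ∀ x, pr w x ∈ Set.range (fderiv ℂ emb w)
  pr_fix : ∀ w ∈ W, ∀ x ∈ Set.range (fderiv ℂ emb w), pr w x = x
  pr_orth : ∀ w ∈ W, ∀ x : Fin m → ℂ, ∀ y ∈ Set.range (fderiv ℂ emb w),
    F.g (x - pr w x) y = 0
  g_nondeg_tangent : ∀ w ∈ W, ∀ x ∈ Set.range (fderiv ℂ emb w),
    (∀ y ∈ Set.range (fderiv ℂ emb w), F.g x y = 0) → x = 0

namespace SubmanifoldDatum

variable {m n : ℕ} {F : FrobeniusStructure m}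

/-- The tangent space `T_pN` at `p = emb w`. -/
def T (S : SubmanifoldDatum m n F) (w : Fin n → ℂ) : Set (Fin m → ℂ) :=
  Set.range (fderiv ℂ S.emb w)

open Classical in
/-- The coordinate vector mapped by `(D emb)_w` to a tangent vector `v`
(junk value `0` if `v` is not tangent). -/
def lift (S : SubmanifoldDatum m n F) (w : Fin n → ℂ) (v : Fin m → ℂ) : Fin n → ℂ :=
  if h : v ∈ Set.range (fderiv ℂ S.emb w) then h.choose else 0

/-- A tangent field: a holomorphic map `W → ℂ^m` with values in the tangent spaces. -/
def IsTangentField (S : SubmanifoldDatum m n F) (X : (Fin n → ℂ) → (Fin m → ℂ)) : Prop :=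
  DifferentiableOn ℂ X S.W ∧ ∀ w ∈ S.W, X w ∈ S.T w

/-- `D_X Y`: the derivative of `Y` in the coordinate direction mapped by `D emb` to `X`. -/
def covD (S : SubmanifoldDatum m n F) (X Y : (Fin n → ℂ) → (Fin m → ℂ)) :
    (Fin n → ℂ) → (Fin m → ℂ) :=
  fun w => fderiv ℂ Y w (S.lift w (X w))

/-- The induced (Levi-Civita) connection `∇_X Y := pr (D_X Y)`. -/
def nabla (S : SubmanifoldDatum m n F) (X Y : (Fin n → ℂ) → (Fin m → ℂ)) :
    (Fin n → ℂ) → (Fin m → ℂ) :=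
  fun w => S.pr w (S.covD X Y w)

/-- The second fundamental form `h(X,Y) := (D_X Y)^⊥`. -/
def sff (S : SubmanifoldDatum m n F) (X Y : (Fin n → ℂ) → (Fin m → ℂ)) :
    (Fin n → ℂ) → (Fin m → ℂ) :=
  fun w => S.covD X Y w - S.pr w (S.covD X Y w)

/-- The shape operator `A_Ξ X := - pr (D_X Ξ)` of a normal field `Ξ`. -/
def shape (S : SubmanifoldDatum m n F) (Xi X : (Fin n → ℂ) → (Fin m → ℂ)) :
    (Fin n → ℂ) → (Fin m → ℂ) :=
  fun w => - S.pr w (S.covD X Xi w)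

/-- The Lie bracket of tangent fields. -/
def bracket (S : SubmanifoldDatum m n F) (X Y : (Fin n → ℂ) → (Fin m → ℂ)) :
    (Fin n → ℂ) → (Fin m → ℂ) :=
  fun w => S.covD X Y w - S.covD Y X w

/-- `e_N := pr e`, the tangential part of the unit field. -/
def eN (S : SubmanifoldDatum m n F) : (Fin n → ℂ) → (Fin m → ℂ) :=
  fun w => S.pr w F.e

/-- `E_N := pr (E ∘ emb)`, the tangential part of the Euler field. -/
def EN (S : SubmanifoldDatum m n F) : (Fin n → ℂ) → (Fin m → ℂ) :=
  fun w => S.pr w (F.E (S.emb w))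

/-- `E_N^⊥ := E ∘ emb - E_N`, the normal part of the Euler field. -/
def ENperp (S : SubmanifoldDatum m n F) : (Fin n → ℂ) → (Fin m → ℂ) :=
  fun w => F.E (S.emb w) - S.pr w (F.E (S.emb w))

/-- The induced product `X * Y := pr (X ∘ Y)`. -/
def star (S : SubmanifoldDatum m n F) (X Y : (Fin n → ℂ) → (Fin m → ℂ)) :
    (Fin n → ℂ) → (Fin m → ℂ) :=
  fun w => S.pr w (F.mul (S.emb w) (X w) (Y w))

/-- The induced metric is flat: the curvature of `∇` vanishes. -/
def FlatInduced (S : SubmanifoldDatum m n F) : Prop :=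
  ∀ X Y Z, S.IsTangentField X → S.IsTangentField Y → S.IsTangentField Z →
    ∀ w ∈ S.W,
      S.nabla X (S.nabla Y Z) w - S.nabla Y (S.nabla X Z) w
        - S.nabla (S.bracket X Y) Z w = 0

/-- The tangent spaces are closed under the ambient product:
`T_pN ∘_p T_pN ⊆ T_pN`. -/
def ClosedUnderMul (S : SubmanifoldDatum m n F) : Prop :=
  ∀ w ∈ S.W, ∀ x ∈ S.T w, ∀ y ∈ S.T w, F.mul (S.emb w) x y ∈ S.T w

/-- The covariant derivative 4-tensor
`(X', X, Y, Z) ↦ X'⟨X*Y, Z⟩ − ⟨(∇_{X'}X)*Y, Z⟩ − ⟨X*(∇_{X'}Y), Z⟩ − ⟨X*Y, ∇_{X'}Z⟩`. -/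
def ctensor (S : SubmanifoldDatum m n F) (X' X Y Z : (Fin n → ℂ) → (Fin m → ℂ)) :
    (Fin n → ℂ) → ℂ :=
  fun w => fderiv ℂ (fun v => F.g (S.star X Y v) (Z v)) w (S.lift w (X' w))
    - F.g (S.star (S.nabla X' X) Y w) (Z w)
    - F.g (S.star X (S.nabla X' Y) w) (Z w)
    - F.g (S.star X Y w) (S.nabla X' Z w)

/-- `N` is a Frobenius submanifold: the induced data satisfy the Frobenius
manifold axioms. -/
structure IsFrobeniusSub (S : SubmanifoldDatum m n F) : Prop where
  nabla_flat : S.FlatInduced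
  star_comm : ∀ X Y, S.IsTangentField X → S.IsTangentField Y →
    ∀ w ∈ S.W, S.star X Y w = S.star Y X w
  star_assoc : ∀ X Y Z, S.IsTangentField X → S.IsTangentField Y → S.IsTangentField Z →
    ∀ w ∈ S.W, S.star (S.star X Y) Z w = S.star X (S.star Y Z) w
  star_unit : ∀ X, S.IsTangentField X → ∀ w ∈ S.W, S.star X S.eN w = X w
  eN_flat : ∀ X, S.IsTangentField X → ∀ w ∈ S.W, S.nabla X S.eN w = 0
  star_invariant : ∀ X Y Z, S.IsTangentField X → S.IsTangentField Y → S.IsTangentField Z →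
    ∀ w ∈ S.W, F.g (S.star X Y w) (Z w) = F.g (X w) (S.star Y Z w)
  potential_symm : ∀ X' X Y Z, S.IsTangentField X' → S.IsTangentField X →
      S.IsTangentField Y → S.IsTangentField Z → ∀ w ∈ S.W,
    S.ctensor X' X Y Z w = S.ctensor X X' Y Z w ∧
    S.ctensor X' X Y Z w = S.ctensor X' Y X Z w ∧
    S.ctensor X' X Y Z w = S.ctensor X' X Z Y w
  euler_metric : ∃ DN : ℂ, ∀ X Y, S.IsTangentField X → S.IsTangentField Y →
    ∀ w ∈ S.W, F.g (S.nabla X S.EN w) (Y w) + F.g (X w) (S.nabla Y S.EN w)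
      = DN * F.g (X w) (Y w)
  euler_prod : ∀ X Y, S.IsTangentField X → S.IsTangentField Y → ∀ w ∈ S.W,
    S.nabla X (S.star Y S.EN) w - S.star (S.nabla X Y) S.EN w
      + S.star X (S.nabla Y S.EN) w - S.nabla (S.star X Y) S.EN w = S.star X Y w

/-- `N` is a natural Frobenius submanifold: a Frobenius submanifold whose
tangent spaces are closed under the ambient product. -/
def IsNaturalFrobeniusSub (S : SubmanifoldDatum m n F) : Prop :=
  S.IsFrobeniusSub ∧ S.ClosedUnderMul

end SubmanifoldDatum

/-!
Differentiating `v ↦ U(v) ∘ W(v)` along `V` gives `(∂_V ∘)(U, W) + (D_V U) ∘ W + U ∘ D_V W`.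
Swapping `U` and `V` and subtracting, the terms `(∂_V ∘)(U, W)` and `(∂_U ∘)(V, W)` cancel by
potentiality, leaving `[V, U] ∘ W + U ∘ D_V W − V ∘ D_U W`. The bracket of tangent fields is
tangent (symmetry of the second derivative of the embedding), so `[V, U] ∘ W` is tangent by
closedness. Multiplication by a tangent vector preserves the tangent space and, being self-adjoint
for the metric, also its orthogonal complement; hence it commutes with the orthogonal projection,
and taking normal parts gives the identity.

The analytic input is that the derivative of a holomorphic map of several variables is again
holomorphic, which follows from the one-variable Cauchy integral formula and Cauchy's estimate.
-/

open Metric Complex Real Module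

theorem differentiableAt_clm_of_forall_apply {𝕜 D E F : Type*} [NontriviallyNormedField 𝕜]
    [CompleteSpace 𝕜] [NormedAddCommGroup D] [NormedSpace 𝕜 D] [NormedAddCommGroup E]
    [NormedSpace 𝕜 E] [FiniteDimensional 𝕜 E] [NormedAddCommGroup F] [NormedSpace 𝕜 F]
    {f : D → E →L[𝕜] F} {x : D} (h : ∀ y, DifferentiableAt 𝕜 (fun x => f x y) x) :
    DifferentiableAt 𝕜 f x := by
  let e₁ := ContinuousLinearEquiv.ofFinrankEq (finrank_fin_fun 𝕜 (n := finrank 𝕜 E)).symm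
  let e₂ := (e₁.arrowCongr (1 : F ≃L[𝕜] F)).trans (ContinuousLinearEquiv.piRing (Fin (finrank 𝕜 E)))
  rw [← Function.id_comp f, ← e₂.symm_comp_self]
  exact e₂.symm.differentiableAt.comp x (differentiableAt_pi.mpr fun i => h _)

section Holomorphic

variable {E F : Type*} [NormedAddCommGroup E] [NormedSpace ℂ E]
  [NormedAddCommGroup F] [NormedSpace ℂ F]

theorem hasDerivAt_comp_const_add_smul {f : E → F} {c : E} (hf : DifferentiableAt ℂ f c)
    (b : E) : HasDerivAt (fun z : ℂ => f (c + z • b)) (fderiv ℂ f c b) 0 := by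
  have hline : HasDerivAt (fun z : ℂ => c + z • b) b 0 := by
    simpa using ((hasDerivAt_id (0 : ℂ)).smul_const b).const_add c
  exact (by simpa using hf.hasFDerivAt : HasFDerivAt f (fderiv ℂ f c) (c + (0 : ℂ) • b))
    |>.comp_hasDerivAt 0 hline

theorem const_add_smul_mem_closedBall {c b : E} {z : ℂ} {r : ℝ} (hz : z ∈ closedBall 0 r) :
    c + z • b ∈ closedBall c (r * ‖b‖) := by
  rw [mem_closedBall_zero_iff] at hz
  rw [mem_closedBall, dist_eq_norm, add_sub_cancel_left, norm_smul]
  gcongr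

theorem norm_fderiv_le_of_forall_mem_closedBall_norm_le {f : E → F} {c : E} {R C : ℝ}
    (hR : 0 < R) (hf : DifferentiableOn ℂ f (closedBall c R))
    (hC : ∀ x ∈ closedBall c R, ‖f x‖ ≤ C) : ‖fderiv ℂ f c‖ ≤ C / R := by
  have hC₀ : 0 ≤ C := (norm_nonneg _).trans (hC c (mem_closedBall_self hR.le))
  refine ContinuousLinearMap.opNorm_le_bound _ (by positivity) fun ξ => ?_
  rcases eq_or_ne ξ 0 with rfl | hξ
  · simp
  have hξ₀ : 0 < ‖ξ‖ := norm_pos_iff.mpr hξ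
  set r := R / ‖ξ‖
  have hr : 0 < r := by positivity
  have hmaps : ∀ z ∈ closedBall (0 : ℂ) r, c + z • ξ ∈ closedBall c R := fun z hz => by
    simpa [r, div_mul_cancel₀ R hξ₀.ne'] using const_add_smul_mem_closedBall (b := ξ) (c := c) hz
  have hline : DiffContOnCl ℂ (fun z : ℂ => f (c + z • ξ)) (ball 0 r) := by
    refine DifferentiableOn.diffContOnCl ?_
    rw [closure_ball _ hr.ne']
    exact hf.comp (by fun_prop) hmaps
  have hd := hasDerivAt_comp_const_add_smul
    (hf.differentiableAt (closedBall_mem_nhds c hR)) ξ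
  calc ‖fderiv ℂ f c ξ‖ = ‖deriv (fun z : ℂ => f (c + z • ξ)) 0‖ := by rw [hd.deriv]
    _ ≤ C / r := norm_deriv_le_of_forall_mem_sphere_norm_le hr hline
        fun z hz => hC _ (hmaps z (sphere_subset_closedBall hz))
    _ = C / R * ‖ξ‖ := by rw [div_div_eq_mul_div]; ring

variable [CompleteSpace F]

theorem fderiv_apply_eq_circleIntegral {f : E → F} {c b : E} {δ : ℝ} (hδ : 0 < δ)
    (hf : ∀ z ∈ closedBall (0 : ℂ) δ, DifferentiableAt ℂ f (c + z • b)) :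
    fderiv ℂ f c b = (2 * π * I)⁻¹ • ∮ z in C(0, δ), (1 / z ^ 2) • f (c + z • b) := by
  have hline : DifferentiableOn ℂ (fun z : ℂ => f (c + z • b)) (closedBall 0 δ) :=
    fun z hz => ((hf z hz).comp z (by fun_prop)).differentiableWithinAt
  have h := hline.deriv_eq_smul_circleIntegral hδ
  simp only [sub_zero] at h
  rw [h, (hasDerivAt_comp_const_add_smul (by simpa using hf 0 (mem_closedBall_self hδ.le)) b).deriv,
    inv_smul_smul₀ two_pi_I_ne_zero]

theorem differentiableAt_circleIntegral_comp_add_smul [FiniteDimensional ℂ E]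
    [SecondCountableTopology F] {f : E → F} {w b : E} {δ ε K : ℝ} (hδ : 0 < δ) (hε : 0 < ε)
    (hf : ∀ v ∈ ball w ε, ∀ z ∈ sphere (0 : ℂ) δ, DifferentiableAt ℂ f (v + z • b))
    (hK : ∀ v ∈ ball w ε, ∀ z ∈ sphere (0 : ℂ) δ, ‖fderiv ℂ f (v + z • b)‖ ≤ K) :
    DifferentiableAt ℂ (fun v => ∮ z in C(0, δ), (1 / z ^ 2) • f (v + z • b)) w := by
  let _ : MeasurableSpace E := borel E
  have _ : BorelSpace E := ⟨rfl⟩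
  set γ := circleMap 0 δ
  have hγ : ∀ θ, γ θ ∈ sphere (0 : ℂ) δ := circleMap_mem_sphere 0 hδ.le
  have hweight : Continuous fun θ => deriv γ θ • (1 / γ θ ^ 2) := by
    simp only [γ, deriv_circleMap]
    exact ((continuous_circleMap 0 δ).mul continuous_const).smul
      (continuous_const.div ((continuous_circleMap 0 δ).pow 2)
        fun θ => pow_ne_zero 2 (circleMap_ne_center hδ.ne'))
  have hcont : ∀ v ∈ ball w ε, Continuous fun θ => (deriv γ θ • (1 / γ θ ^ 2)) • f (v + γ θ • b) :=
    fun v hv => hweight.smul <| continuous_iff_continuousAt.mpr fun θ =>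
      (hf v hv _ (hγ θ)).continuousAt.comp (x := θ)
        (by fun_prop : Continuous fun θ => v + γ θ • b).continuousAt
  have hnorm : ∀ θ, ‖deriv γ θ • (1 / γ θ ^ 2)‖ = δ⁻¹ := fun θ => by
    simp [γ, deriv_circleMap, norm_circleMap_zero, abs_of_pos hδ, sq]
    field_simp
  have hI := intervalIntegral.hasFDerivAt_integral_of_dominated_of_fderiv_le
    (F := fun v θ => (deriv γ θ • (1 / γ θ ^ 2)) • f (v + γ θ • b))
    (F' := fun v θ => (deriv γ θ • (1 / γ θ ^ 2)) • fderiv ℂ f (v + γ θ • b))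
    (bound := fun _ => δ⁻¹ * K) (a := 0) (b := 2 * π) (μ := MeasureTheory.volume)
    (ball_mem_nhds w hε)
    (Filter.eventually_of_mem (ball_mem_nhds w hε) fun v hv => (hcont v hv).aestronglyMeasurable)
    ((hcont w (mem_ball_self hε)).intervalIntegrable _ _)
    (hweight.aestronglyMeasurable.smul
      ((measurable_fderiv ℂ f).comp (by fun_prop : Continuous fun θ => w + γ θ • b).measurable
        ).aestronglyMeasurable)
    (Filter.Eventually.of_forall fun θ _ v hv => by
      rw [norm_smul, hnorm]
      exact mul_le_mul_of_nonneg_left (hK v hv _ (hγ θ)) (by positivity))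
    intervalIntegrable_const
    (Filter.Eventually.of_forall fun θ _ v hv =>
      ((hf v hv _ (hγ θ)).hasFDerivAt.comp v ((hasFDerivAt_id v).add_const _)).const_smul _)
  simp only [circleIntegral, smul_smul]
  exact hI.differentiableAt

theorem DifferentiableOn.differentiableAt_fderiv_apply [FiniteDimensional ℂ E]
    [SecondCountableTopology F] {f : E → F} {s : Set E} (hf : DifferentiableOn ℂ f s)
    (hs : IsOpen s) {w : E} (hw : w ∈ s) (b : E) :
    DifferentiableAt ℂ (fun v => fderiv ℂ f v b) w := by
  obtain ⟨r, hr, hsub⟩ : ∃ r > 0, closedBall w r ⊆ s ∩ {x | ‖f x‖ ≤ ‖f w‖ + 1} := by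
    refine nhds_basis_closedBall.mem_iff.mp (Filter.inter_mem (hs.mem_nhds hw) ?_)
    exact (hf.continuousOn.continuousAt (hs.mem_nhds hw)).norm.eventually
      (eventually_le_nhds (lt_add_one _))
  -- For `v ∈ ball w ρ` the discs `v + z • b`, `‖z‖ ≤ δ`, lie in `closedBall w (2 * ρ)`, where
  -- Cauchy's estimate on balls of radius `ρ` inside `closedBall w r` bounds `fderiv ℂ f`.
  set ρ := r / 3 with hρr
  have hρ : 0 < ρ := by positivity
  have hball : ∀ u ∈ closedBall w (2 * ρ), closedBall u ρ ⊆ closedBall w r := fun u hu =>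
    closedBall_subset_closedBall' (by rw [mem_closedBall] at hu; linarith)
  set δ := ρ / (‖b‖ + 1)
  have hδ : 0 < δ := by positivity
  have hδb : δ * ‖b‖ ≤ ρ := by
    rw [div_mul_eq_mul_div, div_le_iff₀ (by positivity)]
    nlinarith [norm_nonneg b]
  have hnear : ∀ v ∈ ball w ρ, ∀ z ∈ closedBall (0 : ℂ) δ, v + z • b ∈ closedBall w (2 * ρ) :=
    fun v hv z hz => closedBall_subset_closedBall' (by linarith [mem_ball.mp hv])
      (const_add_smul_mem_closedBall hz)
  have hdiff : ∀ u ∈ closedBall w r, DifferentiableAt ℂ f u := fun u hu =>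
    hf.differentiableAt (hs.mem_nhds (hsub hu).1)
  have hbound : ∀ u ∈ closedBall w (2 * ρ), ‖fderiv ℂ f u‖ ≤ (‖f w‖ + 1) / ρ := fun u hu =>
    norm_fderiv_le_of_forall_mem_closedBall_norm_le hρ
      (fun x hx => (hdiff x (hball u hu hx)).differentiableWithinAt)
      fun x hx => (hsub (hball u hu hx)).2
  have hnear' : ∀ v ∈ ball w ρ, ∀ z ∈ closedBall (0 : ℂ) δ, DifferentiableAt ℂ f (v + z • b) :=
    fun v hv z hz => hdiff _ (closedBall_subset_closedBall (by linarith) (hnear v hv z hz))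
  have hcauchy : (fun v => fderiv ℂ f v b)
      =ᶠ[nhds w] fun v => (2 * π * I)⁻¹ • ∮ z in C(0, δ), (1 / z ^ 2) • f (v + z • b) :=
    Filter.eventually_of_mem (ball_mem_nhds w hρ) fun v hv =>
      fderiv_apply_eq_circleIntegral hδ (hnear' v hv)
  refine hcauchy.differentiableAt_iff.mpr (DifferentiableAt.const_smul ?_ _)
  exact differentiableAt_circleIntegral_comp_add_smul hδ hρ
    (fun v hv z hz => hnear' v hv z (sphere_subset_closedBall hz))
    fun v hv z hz => hbound _ (hnear v hv z (sphere_subset_closedBall hz))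

theorem DifferentiableOn.differentiableAt_fderiv [FiniteDimensional ℂ E]
    [SecondCountableTopology F] {f : E → F} {s : Set E} (hf : DifferentiableOn ℂ f s)
    (hs : IsOpen s) {w : E} (hw : w ∈ s) : DifferentiableAt ℂ (fderiv ℂ f) w :=
  differentiableAt_clm_of_forall_apply (hf.differentiableAt_fderiv_apply hs hw)

end Holomorphic

theorem exists_differentiableAt_lift_of_injective {𝕜 D E G : Type*} [NontriviallyNormedField 𝕜]
    [CompleteSpace 𝕜] [NormedAddCommGroup D] [NormedSpace 𝕜 D] [NormedAddCommGroup E]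
    [NormedSpace 𝕜 E] [FiniteDimensional 𝕜 E] [NormedAddCommGroup G] [NormedSpace 𝕜 G]
    [FiniteDimensional 𝕜 G] {A : D → E →L[𝕜] G} {X : D → G} {w : D}
    (hA : DifferentiableAt 𝕜 A w) (hinj : Function.Injective (A w))
    (hX : DifferentiableAt 𝕜 X w) (hrange : ∀ᶠ v in nhds w, X v ∈ Set.range (A v)) :
    ∃ u : D → E, DifferentiableAt 𝕜 u w ∧ ∀ᶠ v in nhds w, A v (u v) = X v := by
  have : CompleteSpace E := FiniteDimensional.complete 𝕜 E
  obtain ⟨B, hB⟩ := LinearMap.exists_leftInverse_of_injective (A w : E →ₗ[𝕜] G)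
    (LinearMap.ker_eq_bot.mpr hinj)
  let B' := LinearMap.toContinuousLinearMap B
  have hBA : IsUnit (B'.comp (A w)) := by
    convert isUnit_one (M := E →L[𝕜] E)
    exact ContinuousLinearMap.coe_injective hB
  have hBAd : DifferentiableAt 𝕜 (fun v => B'.comp (A v)) w :=
    (differentiableAt_const B').clm_comp hA
  refine ⟨fun v => Ring.inverse (B'.comp (A v)) (B' (X v)),
    ((differentiableAt_inverse hBA).comp w hBAd).clm_apply
      ((differentiableAt_const B').clm_apply hX), ?_⟩
  filter_upwards [hrange, hBAd.continuousAt.eventually (Units.isOpen.mem_nhds hBA)]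
    with v ⟨c, hc⟩ hunit
  rw [← hc]
  change A v (Ring.inverse (B'.comp (A v)) ((B'.comp (A v)) c)) = A v c
  rw [← mul_apply_eq_comp, Ring.inverse_mul_cancel _ hunit, one_apply_eq_self]

namespace FrobeniusStructure

variable {m : ℕ} (F : FrobeniusStructure m)

def mulL (p : Fin m → ℂ) : (Fin m → ℂ) →L[ℂ] (Fin m → ℂ) →L[ℂ] (Fin m → ℂ) :=
  LinearMap.toContinuousLinearMap (LinearMap.toContinuousLinearMap.toLinearMap ∘ₗ F.mul p)

@[simp] theorem mulL_apply (p x y : Fin m → ℂ) : F.mulL p x y = F.mul p x y := rfl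

variable {F} {p : Fin m → ℂ}

theorem differentiableAt_mul_apply (hp : p ∈ F.U) (x y : Fin m → ℂ) :
    DifferentiableAt ℂ (fun q => F.mul q x y) p :=
  (F.mul_holo x y).differentiableAt (F.U_open.mem_nhds hp)

theorem differentiableAt_mulL (hp : p ∈ F.U) : DifferentiableAt ℂ F.mulL p :=
  differentiableAt_clm_of_forall_apply fun x => differentiableAt_clm_of_forall_apply fun y =>
    differentiableAt_mul_apply hp x y

theorem fderiv_mulL_apply (hp : p ∈ F.U) (a x y : Fin m → ℂ) :
    fderiv ℂ F.mulL p a x y = fderiv ℂ (fun q => F.mul q x y) p a := by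
  have h := ((F.differentiableAt_mulL hp).hasFDerivAt.clm_apply (hasFDerivAt_const x p)).clm_apply
    (hasFDerivAt_const y p)
  rw [show (fun q => F.mul q x y) = fun q => F.mulL q x y from rfl, h.fderiv]
  simp

theorem fderiv_g_mul_apply (hp : p ∈ F.U) (a x y z : Fin m → ℂ) :
    fderiv ℂ (fun q => F.g (F.mul q x y) z) p a = F.g (fderiv ℂ (fun q => F.mul q x y) p a) z := by
  let gz := LinearMap.toContinuousLinearMap (F.g.flip z)
  rw [show (fun q => F.g (F.mul q x y) z) = gz ∘ fun q => F.mul q x y from rfl,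
    (gz.hasFDerivAt.comp p (differentiableAt_mul_apply hp x y).hasFDerivAt).fderiv]
  rfl

theorem fderiv_mul_apply_comm (hp : p ∈ F.U) (a x y : Fin m → ℂ) :
    fderiv ℂ (fun q => F.mul q x y) p a = fderiv ℂ (fun q => F.mul q a y) p x := by
  refine sub_eq_zero.mp (F.g_nondeg _ fun z => ?_)
  rw [map_sub, LinearMap.sub_apply, ← fderiv_g_mul_apply hp, ← fderiv_g_mul_apply hp,
    F.potential p hp, sub_self]

theorem fderiv_mul_comp_apply {E : Type*} [NormedAddCommGroup E] [NormedSpace ℂ E]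
    {φ X Y : E → (Fin m → ℂ)} {w : E} (hφ : DifferentiableAt ℂ φ w) (hφw : φ w ∈ F.U)
    (hX : DifferentiableAt ℂ X w) (hY : DifferentiableAt ℂ Y w) (ξ : E) :
    fderiv ℂ (fun v => F.mul (φ v) (X v) (Y v)) w ξ
      = fderiv ℂ (fun q => F.mul q (X w) (Y w)) (φ w) (fderiv ℂ φ w ξ)
        + F.mul (φ w) (fderiv ℂ X w ξ) (Y w) + F.mul (φ w) (X w) (fderiv ℂ Y w ξ) := by
  have hM : HasFDerivAt (fun v => F.mulL (φ v)) ((fderiv ℂ F.mulL (φ w)).comp (fderiv ℂ φ w)) w :=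
    HasFDerivAt.comp (g := F.mulL) w (F.differentiableAt_mulL hφw).hasFDerivAt hφ.hasFDerivAt
  have h := (hM.clm_apply hX.hasFDerivAt).clm_apply hY.hasFDerivAt
  rw [show (fun v => F.mul (φ v) (X v) (Y v)) = fun v => F.mulL (φ v) (X v) (Y v) from rfl,
    h.fderiv]
  simp [fderiv_mulL_apply hφw]
  abel

end FrobeniusStructure

namespace SubmanifoldDatum

variable {m n : ℕ} {F : FrobeniusStructure m} (S : SubmanifoldDatum m n F) {w : Fin n → ℂ}

theorem fderiv_emb_lift {x : Fin m → ℂ} (hx : x ∈ S.T w) : fderiv ℂ S.emb w (S.lift w x) = x := by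
  have hx' : x ∈ Set.range (fderiv ℂ S.emb w) := hx
  rw [lift, dif_pos hx']
  exact hx'.choose_spec

variable {S}

theorem IsTangentField.differentiableAt {X : (Fin n → ℂ) → (Fin m → ℂ)}
    (hX : S.IsTangentField X) (hw : w ∈ S.W) : DifferentiableAt ℂ X w :=
  hX.1.differentiableAt (S.W_open.mem_nhds hw)

theorem IsTangentField.exists_fderiv_eq {X : (Fin n → ℂ) → (Fin m → ℂ)}
    (hX : S.IsTangentField X) (hw : w ∈ S.W) :
    ∃ L : (Fin n → ℂ) →L[ℂ] (Fin n → ℂ), ∀ η, fderiv ℂ X w η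
      = fderiv ℂ S.emb w (L η) + fderiv ℂ (fderiv ℂ S.emb) w η (S.lift w (X w)) := by
  have hA := S.emb_holo.differentiableAt_fderiv S.W_open hw
  obtain ⟨u, hu, hAu⟩ := exists_differentiableAt_lift_of_injective hA (S.demb_inj w hw)
    (hX.differentiableAt hw) (Filter.eventually_of_mem (S.W_open.mem_nhds hw) hX.2)
  have huw : u w = S.lift w (X w) :=
    S.demb_inj w hw (hAu.self_of_nhds.trans (S.fderiv_emb_lift (hX.2 w hw)).symm)
  have hXeq : X =ᶠ[nhds w] fun v => fderiv ℂ S.emb v (u v) := hAu.mono fun v hv => hv.symm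
  refine ⟨fderiv ℂ u w, fun η => ?_⟩
  rw [hXeq.fderiv_eq, (hA.hasFDerivAt.clm_apply hu.hasFDerivAt).fderiv, ← huw]
  rfl

theorem bracket_mem_T {X Y : (Fin n → ℂ) → (Fin m → ℂ)} (hX : S.IsTangentField X)
    (hY : S.IsTangentField Y) (hw : w ∈ S.W) : S.bracket X Y w ∈ S.T w := by
  obtain ⟨LX, hLX⟩ := hX.exists_fderiv_eq hw
  obtain ⟨LY, hLY⟩ := hY.exists_fderiv_eq hw
  have hsymm : ∀ η ζ, fderiv ℂ (fderiv ℂ S.emb) w η ζ = fderiv ℂ (fderiv ℂ S.emb) w ζ η :=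
    second_derivative_symmetric_of_eventually
      (Filter.eventually_of_mem (S.W_open.mem_nhds hw) fun v hv =>
        (S.emb_holo.differentiableAt (S.W_open.mem_nhds hv)).hasFDerivAt)
      (S.emb_holo.differentiableAt_fderiv S.W_open hw).hasFDerivAt
  refine ⟨LY (S.lift w (X w)) - LX (S.lift w (Y w)), ?_⟩
  rw [bracket, covD, covD, hLX, hLY, hsymm, map_sub]
  abel

variable (S)

theorem pr_eq_zero_of_orthogonal (hw : w ∈ S.W) {z : Fin m → ℂ}
    (hz : ∀ y ∈ S.T w, F.g z y = 0) : S.pr w z = 0 :=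
  S.g_nondeg_tangent w hw _ (S.pr_mem w hw z) fun y hy => by
    simpa [hz y hy] using S.pr_orth w hw z y hy

theorem pr_mul_of_mem_T (hclosed : S.ClosedUnderMul) (hw : w ∈ S.W) {x : Fin m → ℂ}
    (hx : x ∈ S.T w) (d : Fin m → ℂ) :
    S.pr w (F.mul (S.emb w) x d) = F.mul (S.emb w) x (S.pr w d) := by
  have hnormal : S.pr w (F.mul (S.emb w) x (d - S.pr w d)) = 0 :=
    S.pr_eq_zero_of_orthogonal hw fun y hy => by
      rw [F.mul_comm, F.g_invariant]
      exact S.pr_orth w hw d _ (hclosed w hw x hx y hy)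
  have htangent : S.pr w (F.mul (S.emb w) x (S.pr w d)) = F.mul (S.emb w) x (S.pr w d) :=
    S.pr_fix w hw _ (hclosed w hw x hx _ (S.pr_mem w hw d))
  have hsplit : F.mul (S.emb w) x d
      = F.mul (S.emb w) x (S.pr w d) + F.mul (S.emb w) x (d - S.pr w d) := by
    rw [← map_add, add_sub_cancel]
  rw [hsplit, map_add, hnormal, htangent, add_zero]

theorem covD_mul {U V W' : (Fin n → ℂ) → (Fin m → ℂ)} (hw : w ∈ S.W)
    (hU : DifferentiableAt ℂ U w) (hV : V w ∈ S.T w) (hW' : DifferentiableAt ℂ W' w) :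
    S.covD V (fun v => F.mul (S.emb v) (U v) (W' v)) w
      = fderiv ℂ (fun q => F.mul q (U w) (W' w)) (S.emb w) (V w)
        + F.mul (S.emb w) (S.covD V U w) (W' w) + F.mul (S.emb w) (U w) (S.covD V W' w) := by
  rw [covD, F.fderiv_mul_comp_apply (S.emb_holo.differentiableAt (S.W_open.mem_nhds hw))
    (S.emb_maps w hw) hU hW', S.fderiv_emb_lift hV]
  rfl

end SubmanifoldDatum

/-- Identity (1°) in the proof of Theorem A: if the tangent spaces are closed
under the ambient product, the second fundamental form satisfies the
Codazzi-type relation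
`U ∘ h(V,W) − V ∘ h(U,W) = h(V, U∘W) − h(U, V∘W)` for all tangent fields. -/
theorem codazzi_type {m n : ℕ} (F : FrobeniusStructure m)
    (S : SubmanifoldDatum m n F)
    (hclosed : S.ClosedUnderMul) :
    ∀ U V W', S.IsTangentField U → S.IsTangentField V → S.IsTangentField W' →
      ∀ w ∈ S.W,
        F.mul (S.emb w) (U w) (S.sff V W' w) - F.mul (S.emb w) (V w) (S.sff U W' w)
          = S.sff V (fun v => F.mul (S.emb v) (U v) (W' v)) w
            - S.sff U (fun v => F.mul (S.emb v) (V v) (W' v)) w := by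
  intro U V W' hU hV hW' w hw
  set normal := LinearMap.id - S.pr w
  have hsff : ∀ X Y, S.sff X Y w = normal (S.covD X Y w) := fun _ _ => rfl
  have hnormal_mul :
      ∀ x ∈ S.T w, ∀ d, normal (F.mul (S.emb w) x d) = F.mul (S.emb w) x (normal d) := by
    intro x hx d
    simp only [normal, LinearMap.sub_apply, LinearMap.id_apply, map_sub,
      S.pr_mul_of_mem_T hclosed hw hx]
  have hbracket : normal (F.mul (S.emb w) (S.bracket V U w) (W' w)) = 0 := by
    simp only [normal, LinearMap.sub_apply, LinearMap.id_apply, sub_eq_zero]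
    exact (S.pr_fix w hw _ (hclosed w hw _ (SubmanifoldDatum.bracket_mem_T hV hU hw) _
      (hW'.2 w hw))).symm
  have hdiff : S.covD V (fun v => F.mul (S.emb v) (U v) (W' v)) w
      - S.covD U (fun v => F.mul (S.emb v) (V v) (W' v)) w
      = F.mul (S.emb w) (S.bracket V U w) (W' w) + F.mul (S.emb w) (U w) (S.covD V W' w)
        - F.mul (S.emb w) (V w) (S.covD U W' w) := by
    rw [S.covD_mul hw (hU.differentiableAt hw) (hV.2 w hw) (hW'.differentiableAt hw),
      S.covD_mul hw (hV.differentiableAt hw) (hU.2 w hw) (hW'.differentiableAt hw),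
      F.fderiv_mul_apply_comm (S.emb_maps w hw) (V w) (U w) (W' w), SubmanifoldDatum.bracket,
      map_sub, LinearMap.sub_apply]
    abel
  rw [hsff, hsff, hsff, hsff, ← map_sub, hdiff, map_sub, map_add, hbracket,
    hnormal_mul _ (hU.2 w hw), hnormal_mul _ (hV.2 w hw), zero_add]
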